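/- Let X be a Banach space and let T ⊂ X × X* be a maximal monotone operator with convex graph. Then the function φ_T + δ_T is a representative function of T: it is lower semicontinuous convex, satisfies (φ_T + δ_T)(x, x*) ≥ ⟨x, x*⟩ for all (x, x*) ∈ X × X*, and (φ_T + δ_T)(x, x*) = ⟨x, x*⟩ if and only if (x, x*) ∈ T. -/

import Mathlib

open Filter Topology
noncomputable section
variable {X : Type*} [NormedAddCommGroup X] [NormedSpace ℝ X]

def pairing (p : X × StrongDual ℝ X) : ℝ := p.2 p.1

def ConvexERealOn {E : Type*} [AddCommGroup E] [Module ℝ E] (f : E → EReal) : Prop :=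
  ∀ x y : E, ∀ a b : ℝ, 0 ≤ a → 0 ≤ b → a + b = 1 →
    f (a • x + b • y) ≤ (a : EReal) * f x + (b : EReal) * f y

def IsGamma {E : Type*} [AddCommGroup E] [Module ℝ E] [TopologicalSpace E] (f : E → EReal) : Prop :=
  LowerSemicontinuous f ∧ ConvexERealOn f ∧ ∀ x, f x ≠ ⊥

def EpiConverges {E : Type*} [TopologicalSpace E] (fs : ℕ → E → EReal) (f : E → EReal) : Prop :=
  ∀ z : E,
    (∃ zs : ℕ → E, Tendsto zs atTop (nhds z) ∧
      Tendsto (fun n => fs n (zs n)) atTop (nhds (f z))) ∧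
    (∀ zs : ℕ → E, Tendsto zs atTop (nhds z) →
      f z ≤ Filter.liminf (fun n => fs n (zs n)) atTop)

def conjFn (f : X × StrongDual ℝ X → EReal) (q : StrongDual ℝ X × X) : EReal :=
  ⨆ p : X × StrongDual ℝ X, (((q.1 p.1 + p.2 q.2 : ℝ) : EReal) - f p)

def Lset (f : X × StrongDual ℝ X → EReal) : Set (X × StrongDual ℝ X) :=
  {p | f p = (pairing p : EReal)}

def MonotoneSet (T : Set (X × StrongDual ℝ X)) : Prop :=
  ∀ p ∈ T, ∀ q ∈ T, 0 ≤ (q.2 - p.2) (q.1 - p.1)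

def MaximalMonotone (T : Set (X × StrongDual ℝ X)) : Prop :=
  MonotoneSet T ∧ ∀ S : Set (X × StrongDual ℝ X), MonotoneSet S → T ⊆ S → S = T

def OpLiminf (Ts : ℕ → Set (X × StrongDual ℝ X)) : Set (X × StrongDual ℝ X) :=
  {p | ∃ zs : ℕ → X × StrongDual ℝ X, (∀ n, zs n ∈ Ts n) ∧ Tendsto zs atTop (nhds p)}

def fitz (T : Set (X × StrongDual ℝ X)) (p : X × StrongDual ℝ X) : EReal :=
  ⨆ q ∈ T, (((p.2 - q.2) (q.1 - p.1) + p.2 p.1 : ℝ) : EReal)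

open Classical in
def indic (T : Set (X × StrongDual ℝ X)) (p : X × StrongDual ℝ X) : EReal :=
  if p ∈ T then 0 else ⊤

def IsRepFunOf (g : X × StrongDual ℝ X → EReal) (T : Set (X × StrongDual ℝ X)) : Prop :=
  IsGamma g ∧ (∀ p, (pairing p : EReal) ≤ g p) ∧ ∀ p, (g p = (pairing p : EReal) ↔ p ∈ T)

def IsReflexive (X : Type*) [NormedAddCommGroup X] [NormedSpace ℝ X] : Prop :=
  Function.Surjective (NormedSpace.inclusionInDoubleDual ℝ X)

def WeakTendstoProd (zs : ℕ → X × StrongDual ℝ X) (z : X × StrongDual ℝ X) : Prop :=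
  (∀ g : StrongDual ℝ X, Tendsto (fun n => g (zs n).1) atTop (nhds (g z.1))) ∧
  (∀ G : StrongDual ℝ (StrongDual ℝ X),
    Tendsto (fun n => G (zs n).2) atTop (nhds (G z.2)))

def MoscoConverges (fs : ℕ → X × StrongDual ℝ X → EReal)
    (f : X × StrongDual ℝ X → EReal) : Prop :=
  ∀ z : X × StrongDual ℝ X,
    (∃ zs : ℕ → X × StrongDual ℝ X, Tendsto zs atTop (nhds z) ∧
      Tendsto (fun n => fs n (zs n)) atTop (nhds (f z))) ∧
    (∀ zs : ℕ → X × StrongDual ℝ X, WeakTendstoProd zs z →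
      f z ≤ Filter.liminf (fun n => fs n (zs n)) atTop)

def Tset (h : X × StrongDual ℝ X → EReal) : Set (X × StrongDual ℝ X) :=
  {p | ((2 * pairing p : ℝ) : EReal) = h p + conjFn h (p.2, p.1)}

/-!
On a monotone set `T` the supremum defining `φ_T` at a point of `T` is attained at that point
itself, so `φ_T + δ_T` is the duality pairing on `T` and `+∞` off `T`. Maximality makes `T`
closed, which gives lower semicontinuity. Convexity comes from the identity
`⟨a p + b q⟩ = a ⟨p⟩ + b ⟨q⟩ - a b ⟨q - p⟩` for `a + b = 1`: monotonicity makes the last term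
nonnegative, so the pairing is convex along segments of the convex set `T`.
-/

section ExtendByTop
variable {E : Type*}

def extendByTop (T : Set E) (f : E → ℝ) (p : E) : EReal :=
  open Classical in if p ∈ T then (f p : EReal) else ⊤

variable {T : Set E} {f : E → ℝ}

lemma extendByTop_of_mem {p : E} (hp : p ∈ T) : extendByTop T f p = f p := if_pos hp

lemma extendByTop_of_notMem {p : E} (hp : p ∉ T) : extendByTop T f p = ⊤ := if_neg hp

lemma extendByTop_ne_bot (p : E) : extendByTop T f p ≠ ⊥ := by
  by_cases hp : p ∈ T
  · rw [extendByTop_of_mem hp]; exact EReal.coe_ne_bot _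
  · rw [extendByTop_of_notMem hp]; exact top_ne_bot

lemma coe_le_extendByTop (p : E) : (f p : EReal) ≤ extendByTop T f p := by
  by_cases hp : p ∈ T
  · rw [extendByTop_of_mem hp]
  · rw [extendByTop_of_notMem hp]; exact le_top

lemma extendByTop_eq_coe_iff {p : E} : extendByTop T f p = f p ↔ p ∈ T := by
  by_cases hp : p ∈ T
  · simp [extendByTop_of_mem hp, hp]
  · simp [extendByTop_of_notMem hp, hp]

lemma lowerSemicontinuous_extendByTop [TopologicalSpace E] (hT : IsClosed T)
    (hf : ContinuousOn f T) : LowerSemicontinuous (extendByTop T f) := by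
  intro p y hy
  by_cases hp : p ∈ T
  · rw [extendByTop_of_mem hp] at hy
    have hnear : ∀ᶠ q in 𝓝[T] p, y < (f q : EReal) :=
      ((continuous_coe_real_ereal.tendsto _).comp (hf p hp)).eventually (eventually_gt_nhds hy)
    filter_upwards [eventually_nhdsWithin_iff.mp hnear] with q hq
    by_cases hqT : q ∈ T
    · rw [extendByTop_of_mem hqT]; exact hq hqT
    · rw [extendByTop_of_notMem hqT]; exact hy.trans_le le_top
  · rw [extendByTop_of_notMem hp] at hy
    filter_upwards [hT.isOpen_compl.mem_nhds hp] with q hq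
    rwa [extendByTop_of_notMem hq]

lemma convexERealOn_extendByTop [AddCommGroup E] [Module ℝ E] (hf : ConvexOn ℝ T f) :
    ConvexERealOn (extendByTop T f) := by
  intro x y a b ha hb hab
  rcases ha.eq_or_lt with rfl | ha
  · obtain rfl : b = 1 := by linarith
    simp
  rcases hb.eq_or_lt with rfl | hb
  · obtain rfl : a = 1 := by linarith
    simp
  by_cases hx : x ∈ T
  · by_cases hy : y ∈ T
    · rw [extendByTop_of_mem hx, extendByTop_of_mem hy,
        extendByTop_of_mem (hf.1 hx hy ha.le hb.le hab), ← EReal.coe_mul, ← EReal.coe_mul,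
        ← EReal.coe_add, EReal.coe_le_coe_iff]
      exact hf.2 hx hy ha.le hb.le hab
    · rw [extendByTop_of_notMem hy, EReal.coe_mul_top_of_pos hb,
        EReal.add_top_of_ne_bot (EReal.mul_ne_bot _ _ |>.mpr ?_)]
      · exact le_top
      · simp [extendByTop_ne_bot, ha.le]
  · rw [extendByTop_of_notMem hx, EReal.coe_mul_top_of_pos ha,
      EReal.top_add_of_ne_bot (EReal.mul_ne_bot _ _ |>.mpr ?_)]
    · exact le_top
    · simp [extendByTop_ne_bot, hb.le]

end ExtendByTop

section Monotone
variable {T : Set (X × StrongDual ℝ X)}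

lemma continuous_pairing : Continuous (pairing : X × StrongDual ℝ X → ℝ) :=
  isBoundedBilinearMap_apply.continuous.comp (continuous_snd.prodMk continuous_fst)

lemma pairing_neg (p : X × StrongDual ℝ X) : pairing (-p) = pairing p := by
  simp [pairing]

lemma pairing_sub_comm (p q : X × StrongDual ℝ X) : pairing (p - q) = pairing (q - p) := by
  rw [← pairing_neg, neg_sub]

lemma pairing_smul_add_smul (p q : X × StrongDual ℝ X) {a b : ℝ} (hab : a + b = 1) :
    pairing (a • p + b • q) = a * pairing p + b * pairing q - a * b * pairing (q - p) := by
  obtain rfl : b = 1 - a := by linarith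
  simp only [pairing, Prod.fst_add, Prod.snd_add, Prod.smul_fst, Prod.smul_snd, Prod.fst_sub,
    Prod.snd_sub, map_add, map_sub, map_smul, add_apply, sub_apply, smul_apply, smul_eq_mul]
  ring

lemma monotoneSet_iff_pairing :
    MonotoneSet T ↔ ∀ p ∈ T, ∀ q ∈ T, 0 ≤ pairing (q - p) := Iff.rfl

lemma MonotoneSet.convexOn_pairing (hT : MonotoneSet T) (hconv : Convex ℝ T) :
    ConvexOn ℝ T pairing := by
  refine ⟨hconv, fun p hp q hq a b ha hb hab => ?_⟩
  rw [pairing_smul_add_smul p q hab, smul_eq_mul, smul_eq_mul]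
  nlinarith [mul_nonneg (mul_nonneg ha hb) (monotoneSet_iff_pairing.mp hT p hp q hq)]

lemma le_fitz (p : X × StrongDual ℝ X) {q : X × StrongDual ℝ X} (hq : q ∈ T) :
    (((p.2 - q.2) (q.1 - p.1) + p.2 p.1 : ℝ) : EReal) ≤ fitz T p :=
  le_iSup₂ (f := fun q (_ : q ∈ T) => (((p.2 - q.2) (q.1 - p.1) + p.2 p.1 : ℝ) : EReal)) q hq

lemma MonotoneSet.fitz_eq_pairing (hT : MonotoneSet T) {p : X × StrongDual ℝ X} (hp : p ∈ T) :
    fitz T p = pairing p := by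
  refine le_antisymm (iSup₂_le fun q hq => ?_) (le_of_eq_of_le (by simp [pairing]) (le_fitz p hp))
  have hpq : (p.2 - q.2) (q.1 - p.1) + p.2 p.1 = pairing p - pairing (q - p) := by
    simp only [pairing, Prod.fst_sub, Prod.snd_sub, map_sub, sub_apply]
    ring
  rw [hpq, EReal.coe_le_coe_iff]
  linarith [monotoneSet_iff_pairing.mp hT p hp q hq]

lemma fitz_ne_bot (hT : T.Nonempty) (p : X × StrongDual ℝ X) : fitz T p ≠ ⊥ :=
  let ⟨_, hq⟩ := hT
  ne_bot_of_le_ne_bot (EReal.coe_ne_bot _) (le_fitz p hq)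

lemma MonotoneSet.fitz_add_indic (hT : MonotoneSet T) (hne : T.Nonempty) :
    (fun p => fitz T p + indic T p) = extendByTop T pairing := by
  funext p
  by_cases hp : p ∈ T
  · simp [indic, hp, extendByTop_of_mem, hT.fitz_eq_pairing hp]
  · simp only [indic, hp, if_false, extendByTop_of_notMem hp]
    exact EReal.add_top_of_ne_bot (fitz_ne_bot hne p)

lemma MonotoneSet.insert (hT : MonotoneSet T) {p : X × StrongDual ℝ X}
    (hp : ∀ q ∈ T, 0 ≤ pairing (q - p)) : MonotoneSet (insert p T) := by
  rw [monotoneSet_iff_pairing]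
  rintro a (rfl | ha) b (rfl | hb)
  · simp [pairing]
  · exact hp b hb
  · rw [pairing_sub_comm]; exact hp a ha
  · exact hT a ha b hb

lemma MaximalMonotone.mem_of_forall (hT : MaximalMonotone T) {p : X × StrongDual ℝ X}
    (hp : ∀ q ∈ T, 0 ≤ pairing (q - p)) : p ∈ T :=
  hT.2 _ (hT.1.insert hp) (Set.subset_insert p T) ▸ Set.mem_insert p T

lemma MaximalMonotone.nonempty (hT : MaximalMonotone T) : T.Nonempty := by
  by_contra h
  rw [Set.not_nonempty_iff_eq_empty] at h
  simpa [h] using hT.mem_of_forall (p := 0) (by simp [h])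

lemma MaximalMonotone.isClosed (hT : MaximalMonotone T) : IsClosed T := by
  refine isClosed_of_closure_subset fun p hp => hT.mem_of_forall fun q hq => ?_
  have hclosed : IsClosed {z : X × StrongDual ℝ X | 0 ≤ pairing (q - z)} :=
    isClosed_le continuous_const (continuous_pairing.comp (continuous_const.sub continuous_id))
  exact closure_minimal (fun z hz => hT.1 z hz q hq) hclosed hp

end Monotone

theorem stmt14_general
    (T : Set (X × StrongDual ℝ X))
    (hmax : MaximalMonotone T) (hconv : Convex ℝ T) :
    IsRepFunOf (fun p => fitz T p + indic T p) T := by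
  rw [hmax.1.fitz_add_indic hmax.nonempty]
  exact ⟨⟨lowerSemicontinuous_extendByTop hmax.isClosed continuous_pairing.continuousOn,
      convexERealOn_extendByTop (hmax.1.convexOn_pairing hconv), extendByTop_ne_bot⟩,
    coe_le_extendByTop, fun _ => extendByTop_eq_coe_iff⟩

/-- For a maximal monotone operator `T` with convex graph,
`φ_T + δ_T` is a representative function of `T`. -/
theorem stmt14 [CompleteSpace X]
    (T : Set (X × StrongDual ℝ X))
    (hmax : MaximalMonotone T) (hconv : Convex ℝ T) :
    IsRepFunOf (fun p => fitz T p + indic T p) T :=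
  stmt14_general T hmax hconv
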